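/- arXiv:1912.02435 — 3 statements merged into one kernel-verified Lean document; each statement's English description precedes it below -/
import Mathlib

section
/- Let n ≥ 1 and let φ : ℝⁿ × ℝⁿ → ℝⁿ, (q, q̄) ↦ φ(q, q̄), be a C² map such that for every (q, q̄) the partial derivative A(q, q̄) := D_{q̄}φ(q, q̄) : ℝⁿ → ℝⁿ (derivative in the second variable) is an invertible linear map. Define the lift φ̄ : (ℝⁿ × ℝⁿ) × (ℝⁿ × ℝⁿ) → ℝⁿ × ℝⁿ by φ̄((q, p), (q̄, p̄)) := (φ(q, q̄), ((A(q, q̄))ᵀ)⁻¹ p̄), where ᵀ denotes the adjoint with respect to the standard inner product. Then for every point ((q, p), (q̄, p̄)) the partial derivative of φ̄ in the second variable (q̄, p̄) is invertible, and for each fixed (q, p, q̄) the map R̄ : p̄ ↦ −(D_{(q̄,p̄)}φ̄((q,p),(q̄,p̄)))⁻¹ ∘ D_{(q,p)}φ̄((q,p),(q̄,p̄)), with values in linear maps ℝ²ⁿ → ℝ²ⁿ, is affine in p̄: there exist T₀(q, q̄) ∈ L(ℝ²ⁿ, ℝ²ⁿ) and a linear map T₁(q, q̄) : ℝⁿ →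 L(ℝ²ⁿ, ℝ²ⁿ) such that R̄(p̄) = T₀(q, q̄) + T₁(q, q̄)(p̄) for all p̄. In particular the result is independent of p. -/
/-!
Write `φ̄((q, p), (q̄, p̄)) = (φ(q, q̄), G(q, q̄) p̄)` with `G = (Aᵀ)⁻¹`. Both partial derivatives
of `φ̄` are block lower triangular: in `(q̄, p̄)` the diagonal blocks are `A` and `G(q, q̄)`, so it
is invertible, and the off-diagonal block `(D_{q̄} G) p̄` is linear in `p̄`; in `(q, p)` only the
`q`-column survives, namely `(D_q φ, (D_q G) p̄)`. Inverting the triangular block gives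
`R̄ = -(K, G⁻¹ (D_q G - D_{q̄} G ∘ K) p̄) ∘ pr_q` with `K = A⁻¹ D_q φ`, which is affine in `p̄`
and does not involve `p`.
-/

open ContinuousLinearMap

theorem IsUnit.isInvertible {R M : Type*} [Ring R] [TopologicalSpace M] [AddCommGroup M]
    [Module R M] {f : M →L[R] M} (hf : IsUnit f) : f.IsInvertible := by
  obtain ⟨u, rfl⟩ := hf
  exact ⟨ContinuousLinearEquiv.unitsEquiv R M u, rfl⟩

section FiberLift

variable {𝕜 : Type*} [NontriviallyNormedField 𝕜] {E F : Type*}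
  [NormedAddCommGroup E] [NormedSpace 𝕜 E] [NormedAddCommGroup F] [NormedSpace 𝕜 F]

def fiberLift (f : E × E → E) (G : E × E → F →L[𝕜] F) : (E × F) × (E × F) → E × F :=
  fun x => (f (x.1.1, x.2.1), G (x.1.1, x.2.1) x.2.2)

variable {f : E × E → E} {G : E × E → F →L[𝕜] F} {f' : E × E →L[𝕜] E}
  {G' : E × E →L[𝕜] F →L[𝕜] F} {q qb : E} (p pb : F)

theorem hasFDerivAt_fiberLift_snd (hf : HasFDerivAt f f' (q, qb))
    (hG : HasFDerivAt G G' (q, qb)) :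
    HasFDerivAt (fun z => fiberLift f G ((q, p), z))
      ((f' ∘L inr 𝕜 E E ∘L fst 𝕜 E F).prod
        ((G' ∘L inr 𝕜 E E).flip pb ∘L fst 𝕜 E F + G (q, qb) ∘L snd 𝕜 E F)) (qb, pb) := by
  have hin : HasFDerivAt (fun z : E × F => (q, z.1)) (inr 𝕜 E E ∘L fst 𝕜 E F) (qb, pb) :=
    (hasFDerivAt_prodMk_right q qb).comp (qb, pb) hasFDerivAt_fst
  refine (hf.comp (qb, pb) hin).prodMk
    (((hG.comp (qb, pb) hin).clm_apply hasFDerivAt_snd).congr_fderiv ?_)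
  ext <;> simp [add_comm]

theorem hasFDerivAt_fiberLift_fst (hf : HasFDerivAt f f' (q, qb))
    (hG : HasFDerivAt G G' (q, qb)) :
    HasFDerivAt (fun x => fiberLift f G (x, (qb, pb)))
      ((f' ∘L inl 𝕜 E E ∘L fst 𝕜 E F).prod ((G' ∘L inl 𝕜 E E).flip pb ∘L fst 𝕜 E F)) (q, p) := by
  have hin : HasFDerivAt (fun x : E × F => (x.1, qb)) (inl 𝕜 E E ∘L fst 𝕜 E F) (q, p) :=
    (hasFDerivAt_prodMk_left q qb).comp (q, p) (hasFDerivAt_fst (𝕜 := 𝕜) (F := F) (p := (q, p)))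
  refine (hf.comp (q, p) hin).prodMk
    (((hG.comp (q, p) hin).clm_apply (hasFDerivAt_const pb _)).congr_fderiv ?_)
  ext <;> simp

variable {eA : E ≃L[𝕜] E} {eG : F ≃L[𝕜] F}

theorem fderiv_fiberLift_snd_eq_skewProd (hf : HasFDerivAt f f' (q, qb))
    (hG : HasFDerivAt G G' (q, qb)) (heA : (eA : E →L[𝕜] E) = f' ∘L inr 𝕜 E E)
    (heG : (eG : F →L[𝕜] F) = G (q, qb)) :
    fderiv 𝕜 (fun z => fiberLift f G ((q, p), z)) (qb, pb) =
      eA.skewProd eG ((G' ∘L inr 𝕜 E E).flip pb) := by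
  have heA' z : eA z = f' (0, z) := by rw [← ContinuousLinearEquiv.coe_coe, heA]; rfl
  rw [(hasFDerivAt_fiberLift_snd p pb hf hG).fderiv]
  ext z <;> simp [heA', ← heG, add_comm]

theorem neg_ringInverse_fderiv_fiberLift_snd_comp (hf : HasFDerivAt f f' (q, qb))
    (hG : HasFDerivAt G G' (q, qb)) (heA : (eA : E →L[𝕜] E) = f' ∘L inr 𝕜 E E)
    (heG : (eG : F →L[𝕜] F) = G (q, qb)) :
    -(Ring.inverse (fderiv 𝕜 (fun z => fiberLift f G ((q, p), z)) (qb, pb))) ∘L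
        fderiv 𝕜 (fun x => fiberLift f G (x, (qb, pb))) (q, p) =
      -(((eA.symm : E →L[𝕜] E) ∘L f' ∘L inl 𝕜 E E).prod
          ((eG.symm : F →L[𝕜] F) ∘L
            (G' ∘L (inl 𝕜 E E - inr 𝕜 E E ∘L (eA.symm : E →L[𝕜] E) ∘L f' ∘L inl 𝕜 E E)).flip pb)
        ∘L fst 𝕜 E F) := by
  rw [fderiv_fiberLift_snd_eq_skewProd p pb hf hG heA heG,
    (hasFDerivAt_fiberLift_fst p pb hf hG).fderiv, ringInverse_equiv,
    ContinuousLinearMap.inverse_equiv]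
  ext z <;> simp

theorem exists_prod_comp_eq_add {X E' P : Type*} [NormedAddCommGroup X] [NormedSpace 𝕜 X]
    [NormedAddCommGroup E'] [NormedSpace 𝕜 E'] [NormedAddCommGroup P] [NormedSpace 𝕜 P]
    (K : E →L[𝕜] E') (N : P →L[𝕜] E →L[𝕜] F) (π : X →L[𝕜] E) :
    ∃ (T₀ : X →L[𝕜] E' × F) (T₁ : P →L[𝕜] X →L[𝕜] E' × F), ∀ v, K.prod (N v) ∘L π = T₀ + T₁ v :=
  ⟨K.prod 0 ∘L π, precomp _ π ∘L postcomp E (inr 𝕜 E' F) ∘L N, fun v => by ext <;> simp⟩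

theorem fiberLift_connection_affine (hf : DifferentiableAt 𝕜 f (q, qb))
    (hG : DifferentiableAt 𝕜 G (q, qb)) (hA : IsUnit (fderiv 𝕜 f (q, qb) ∘L inr 𝕜 E E))
    (hG₀ : IsUnit (G (q, qb))) :
    (∀ p pb : F, IsUnit (fderiv 𝕜 (fun z => fiberLift f G ((q, p), z)) (qb, pb))) ∧
    ∃ (T₀ : E × F →L[𝕜] E × F) (T₁ : F →L[𝕜] E × F →L[𝕜] E × F), ∀ p pb : F,
      -(Ring.inverse (fderiv 𝕜 (fun z => fiberLift f G ((q, p), z)) (qb, pb))) ∘L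
          fderiv 𝕜 (fun x => fiberLift f G (x, (qb, pb))) (q, p) = T₀ + T₁ pb := by
  obtain ⟨eA, heA⟩ := hA.isInvertible
  obtain ⟨eG, heG⟩ := hG₀.isInvertible
  refine ⟨fun p pb => ?_, ?_⟩
  · rw [fderiv_fiberLift_snd_eq_skewProd p pb hf.hasFDerivAt hG.hasFDerivAt heA heG]
    exact ((ContinuousLinearEquiv.unitsEquiv 𝕜 (E × F)).symm _).isUnit
  · set K := (eA.symm : E →L[𝕜] E) ∘L fderiv 𝕜 f (q, qb) ∘L inl 𝕜 E E
    obtain ⟨T₀, T₁, hT⟩ := exists_prod_comp_eq_add K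
      (postcomp E (eG.symm : F →L[𝕜] F) ∘L
        (fderiv 𝕜 G (q, qb) ∘L (inl 𝕜 E E - inr 𝕜 E E ∘L K)).flip) (fst 𝕜 E F)
    refine ⟨-T₀, -T₁, fun p pb => ?_⟩
    rw [neg_ringInverse_fderiv_fiberLift_snd_comp p pb hf.hasFDerivAt hG.hasFDerivAt heA heG,
      neg_apply, ← neg_add, ← hT pb]
    rfl

end FiberLift

theorem IsUnit.adjoint {𝕜 E : Type*} [RCLike 𝕜] [NormedAddCommGroup E] [InnerProductSpace 𝕜 E]
    [CompleteSpace E] {T : E →L[𝕜] E} (h : IsUnit T) : IsUnit (adjoint T) :=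
  star_eq_adjoint T ▸ h.star

section CotangentLift

variable {X E : Type*} [NormedAddCommGroup X] [NormedSpace ℝ X]
  [NormedAddCommGroup E] [InnerProductSpace ℝ E] [CompleteSpace E]

theorem DifferentiableAt.ringInverse_adjoint {M : X → E →L[ℝ] E} {x : X}
    (hM : DifferentiableAt ℝ M x) (hMx : IsUnit (M x)) :
    DifferentiableAt ℝ (fun x => Ring.inverse (adjoint (M x))) x := by
  simp_rw [← star_eq_adjoint]
  exact hM.star.inverse hMx.star

theorem cotangentLift_connection_affine (φ : E × E → E) (hφ : ContDiff ℝ 2 φ)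
    (A : E → E → E →L[ℝ] E) (hA : ∀ q qb, A q qb = fderiv ℝ (fun y => φ (q, y)) qb)
    (hAinv : ∀ q qb, IsUnit (A q qb)) (φbar : (E × E) × (E × E) → E × E)
    (hφbar : ∀ q p qb pb,
      φbar ((q, p), (qb, pb)) = (φ (q, qb), Ring.inverse (adjoint (A q qb)) pb)) :
    (∀ q p qb pb : E, IsUnit (fderiv ℝ (fun y => φbar ((q, p), y)) (qb, pb))) ∧
    ∀ q qb : E, ∃ (T₀ : E × E →L[ℝ] E × E) (T₁ : E →L[ℝ] E × E →L[ℝ] E × E), ∀ p pb : E,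
      -(Ring.inverse (fderiv ℝ (fun y => φbar ((q, p), y)) (qb, pb))) ∘L
          fderiv ℝ (fun x => φbar (x, (qb, pb))) (q, p) = T₀ + T₁ pb := by
  have hφ₁ : Differentiable ℝ φ := hφ.differentiable (by norm_num)
  have hA' : ∀ q qb, A q qb = fderiv ℝ φ (q, qb) ∘L inr ℝ E E := fun q qb => by
    rw [hA]
    exact ((hφ₁ _).hasFDerivAt.comp qb (hasFDerivAt_prodMk_right q qb)).fderiv
  obtain rfl : φbar = fiberLift φ fun z => Ring.inverse (adjoint (fderiv ℝ φ z ∘L inr ℝ E E)) :=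
    funext fun ⟨⟨q, p⟩, ⟨qb, pb⟩⟩ => by rw [hφbar, hA']; rfl
  have hM : Differentiable ℝ fun z => fderiv ℝ φ z ∘L inr ℝ E E :=
    ((hφ.fderiv_right (m := 1) (by norm_num)).differentiable (by norm_num)).clm_comp
      (differentiable_const _)
  have hAinv' q qb : IsUnit (fderiv ℝ φ (q, qb) ∘L inr ℝ E E) := hA' q qb ▸ hAinv q qb
  have key q qb := fiberLift_connection_affine (hφ₁ (q, qb))
    ((hM (q, qb)).ringInverse_adjoint (hAinv' q qb)) (hAinv' q qb)
    (hAinv' q qb).adjoint.ringInverse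
  exact ⟨fun q p qb pb => (key q qb).1 p pb, fun q qb => (key q qb).2⟩

end CotangentLift

theorem stmt0_general (n : ℕ)
    (φ : EuclideanSpace ℝ (Fin n) × EuclideanSpace ℝ (Fin n) → EuclideanSpace ℝ (Fin n))
    (hφ : ContDiff ℝ 2 φ)
    (A : EuclideanSpace ℝ (Fin n) → EuclideanSpace ℝ (Fin n) →
      (EuclideanSpace ℝ (Fin n) →L[ℝ] EuclideanSpace ℝ (Fin n)))
    (hA : ∀ q qb, A q qb = fderiv ℝ (fun y => φ (q, y)) qb)
    (hAinv : ∀ q qb, IsUnit (A q qb))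
    (φbar : (EuclideanSpace ℝ (Fin n) × EuclideanSpace ℝ (Fin n)) ×
        (EuclideanSpace ℝ (Fin n) × EuclideanSpace ℝ (Fin n)) →
      EuclideanSpace ℝ (Fin n) × EuclideanSpace ℝ (Fin n))
    (hφbar : ∀ q p qb pb, φbar ((q, p), (qb, pb)) =
      (φ (q, qb), Ring.inverse (ContinuousLinearMap.adjoint (A q qb)) pb)) :
    (∀ q p qb pb : EuclideanSpace ℝ (Fin n),
      IsUnit (fderiv ℝ (fun y => φbar ((q, p), y)) (qb, pb))) ∧
    (∀ q qb : EuclideanSpace ℝ (Fin n),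
      ∃ (T₀ : (EuclideanSpace ℝ (Fin n) × EuclideanSpace ℝ (Fin n)) →L[ℝ]
          (EuclideanSpace ℝ (Fin n) × EuclideanSpace ℝ (Fin n)))
        (T₁ : EuclideanSpace ℝ (Fin n) →L[ℝ]
          ((EuclideanSpace ℝ (Fin n) × EuclideanSpace ℝ (Fin n)) →L[ℝ]
            (EuclideanSpace ℝ (Fin n) × EuclideanSpace ℝ (Fin n)))),
        ∀ p pb : EuclideanSpace ℝ (Fin n),
          -(Ring.inverse (fderiv ℝ (fun y => φbar ((q, p), y)) (qb, pb))).comp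
              (fderiv ℝ (fun x => φbar (x, (qb, pb))) (q, p)) =
            T₀ + T₁ pb) :=
  cotangentLift_connection_affine φ hφ A hA hAinv φbar hφbar

/-- Lift of a formal exponential map to the cotangent bundle: if `φ : ℝⁿ × ℝⁿ → ℝⁿ` is `C²`
with invertible partial derivative `A(q,q̄) = D_{q̄}φ(q,q̄)` in the second variable, and
`φ̄((q,p),(q̄,p̄)) = (φ(q,q̄), ((A(q,q̄))ᵀ)⁻¹ p̄)` is its lift, then the partial derivative of
`φ̄` in its second variable is everywhere invertible, and the map
`R̄ : p̄ ↦ −(D_{(q̄,p̄)}φ̄)⁻¹ ∘ D_{(q,p)}φ̄` is affine in `p̄`, with coefficients depending only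
on `(q,q̄)` (in particular independent of `p`). -/
theorem stmt0 (n : ℕ) (hn : 1 ≤ n)
    (φ : EuclideanSpace ℝ (Fin n) × EuclideanSpace ℝ (Fin n) → EuclideanSpace ℝ (Fin n))
    (hφ : ContDiff ℝ 2 φ)
    (A : EuclideanSpace ℝ (Fin n) → EuclideanSpace ℝ (Fin n) →
      (EuclideanSpace ℝ (Fin n) →L[ℝ] EuclideanSpace ℝ (Fin n)))
    (hA : ∀ q qb, A q qb = fderiv ℝ (fun y => φ (q, y)) qb)
    (hAinv : ∀ q qb, IsUnit (A q qb))
    (φbar : (EuclideanSpace ℝ (Fin n) × EuclideanSpace ℝ (Fin n)) ×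
        (EuclideanSpace ℝ (Fin n) × EuclideanSpace ℝ (Fin n)) →
      EuclideanSpace ℝ (Fin n) × EuclideanSpace ℝ (Fin n))
    (hφbar : ∀ q p qb pb, φbar ((q, p), (qb, pb)) =
      (φ (q, qb), Ring.inverse (ContinuousLinearMap.adjoint (A q qb)) pb)) :
    (∀ q p qb pb : EuclideanSpace ℝ (Fin n),
      IsUnit (fderiv ℝ (fun y => φbar ((q, p), y)) (qb, pb))) ∧
    (∀ q qb : EuclideanSpace ℝ (Fin n),
      ∃ (T₀ : (EuclideanSpace ℝ (Fin n) × EuclideanSpace ℝ (Fin n)) →L[ℝ]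
          (EuclideanSpace ℝ (Fin n) × EuclideanSpace ℝ (Fin n)))
        (T₁ : EuclideanSpace ℝ (Fin n) →L[ℝ]
          ((EuclideanSpace ℝ (Fin n) × EuclideanSpace ℝ (Fin n)) →L[ℝ]
            (EuclideanSpace ℝ (Fin n) × EuclideanSpace ℝ (Fin n)))),
        ∀ p pb : EuclideanSpace ℝ (Fin n),
          -(Ring.inverse (fderiv ℝ (fun y => φbar ((q, p), y)) (qb, pb))).comp
              (fderiv ℝ (fun x => φbar (x, (qb, pb))) (q, p)) =
            T₀ + T₁ pb) :=
  stmt0_general n φ hφ A hA hAinv φbar hφbar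
end

section
/- Let z be a complex number with |z| < 1. Then the function on the open unit disk w ↦ 1/(z − w) − conj(w)/(1 − z·conj(w)) − conj(z) is Lebesgue-integrable on {w ∈ ℂ : |w| < 1}, and its integral over the open unit disk equals 0. -/
/-!
In polar coordinates the integral over the disk becomes `∫₀¹ 2πr · A(r) dr`, where `A(r)` is the
average of the integrand over the circle `|w| = r`. These averages come from the mean value
property. The term `conj w / (1 - z conj w)` is the conjugate of `w / (1 - conj z · w)`, which is
holomorphic on the closed disk of radius `r` and vanishes at `0`, so it averages to `0`. For
`r < |z|` the term `1 / (z - w)` is holomorphic on that disk and averages to `1 / z`. For `r > |z|`,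
`conj w = r² / w` on the circle turns `1 / (z - w)` into the conjugate of `w / (conj z · w - r²)`,
which averages to `0`. Hence `A(r) = 1/z - conj z` for `r < |z|` and `A(r) = -conj z` for `r > |z|`,
and the integral is `π|z|²/z - π conj z = 0`. Integrability holds because `1 / (z - w)` is locally
integrable in real dimension two and the rest of the integrand is continuous on the closed disk.
-/

open MeasureTheory Real Set Metric ComplexConjugate

namespace Complex

variable {E : Type*} [NormedAddCommGroup E] [NormedSpace ℝ E]

theorem polarCoord_symm_eq_circleMap (p : ℝ × ℝ) :
    Complex.polarCoord.symm p = circleMap 0 p.1 p.2 := by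
  simp [circleMap, Complex.exp_mul_I, ← Complex.ofReal_cos, ← Complex.ofReal_sin]

theorem integrable_iff_integrableOn_polarCoord_target (g : ℂ → E) :
    Integrable g ↔
      IntegrableOn (fun p => p.1 • g (Complex.polarCoord.symm p)) polarCoord.target := by
  rw [← (volume_preserving_equiv_real_prod.symm).integrable_comp_emb
    measurableEquivRealProd.symm.measurableEmbedding, ← integrableOn_univ,
    ← integrableOn_congr_set_ae polarCoord_source_ae_eq_univ,
    ← polarCoord.symm_image_target_eq_source,
    integrableOn_image_iff_integrableOn_abs_det_fderiv_smul volume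
      polarCoord.open_target.measurableSet
      (fun p _ => (hasFDerivAt_polarCoord_symm p).hasFDerivWithinAt) polarCoord.symm.injOn]
  refine integrableOn_congr_fun (fun p hp => ?_) polarCoord.open_target.measurableSet
  rw [det_fderivPolarCoordSymm, abs_of_pos (show 0 < p.1 from hp.1)]
  rfl

theorem Ioo_prod_Ioo_subset_polarCoord_target (R : ℝ) :
    Ioo 0 R ×ˢ Ioo (-π) π ⊆ polarCoord.target :=
  prod_mono Ioo_subset_Ioi_self subset_rfl

theorem smul_indicator_ball_polarCoord_symm (f : ℂ → E) (R : ℝ) {p : ℝ × ℝ}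
    (hp : p ∈ polarCoord.target) :
    p.1 • (ball (0 : ℂ) R).indicator f (Complex.polarCoord.symm p) =
      (Ioo 0 R ×ˢ Ioo (-π) π).indicator (fun p => p.1 • f (Complex.polarCoord.symm p)) p := by
  obtain ⟨hr, hθ⟩ := hp
  by_cases h : p.1 < R <;> simp_all [abs_of_pos (show 0 < p.1 from hr)]

theorem integrableOn_ball_zero_iff_integrableOn_polar (f : ℂ → E) (R : ℝ) :
    IntegrableOn f (ball 0 R) ↔
      IntegrableOn (fun p => p.1 • f (Complex.polarCoord.symm p)) (Ioo 0 R ×ˢ Ioo (-π) π) := by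
  rw [← integrable_indicator_iff measurableSet_ball, integrable_iff_integrableOn_polarCoord_target,
    integrableOn_congr_fun (fun p hp => smul_indicator_ball_polarCoord_symm f R hp)
      polarCoord.open_target.measurableSet, IntegrableOn,
    integrable_indicator_iff (measurableSet_Ioo.prod measurableSet_Ioo), IntegrableOn,
    Measure.restrict_restrict (measurableSet_Ioo.prod measurableSet_Ioo),
    inter_eq_left.2 (Ioo_prod_Ioo_subset_polarCoord_target R), IntegrableOn]

theorem setIntegral_ball_zero_eq_setIntegral_polar (f : ℂ → E) (R : ℝ) :
    ∫ w in ball 0 R, f w =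
      ∫ p in Ioo 0 R ×ˢ Ioo (-π) π, p.1 • f (Complex.polarCoord.symm p) := by
  rw [← integral_indicator measurableSet_ball, ← Complex.integral_comp_polarCoord_symm,
    setIntegral_congr_fun polarCoord.open_target.measurableSet
      (fun p hp => smul_indicator_ball_polarCoord_symm f R hp),
    setIntegral_indicator (measurableSet_Ioo.prod measurableSet_Ioo),
    inter_eq_right.2 (Ioo_prod_Ioo_subset_polarCoord_target R)]

theorem setIntegral_Ioo_neg_pi_pi_comp_circleMap (f : ℂ → E) (c : ℂ) (r : ℝ) :
    ∫ θ in Ioo (-π) π, f (circleMap c r θ) = (2 * π) • circleAverage f c r := by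
  have hper := (periodic_circleMap c r).comp f |>.intervalIntegral_add_eq (-π) 0
  rw [show -π + 2 * π = π by ring, zero_add] at hper
  rw [circleAverage_def, smul_inv_smul₀ (by positivity), ← integral_Ioc_eq_integral_Ioo,
    ← intervalIntegral.integral_of_le (by linarith [pi_pos])]
  exact hper

theorem setIntegral_ball_zero_eq_integral_circleAverage [CompleteSpace E] {f : ℂ → E} {R : ℝ}
    (hf : IntegrableOn f (ball 0 R)) :
    ∫ w in ball 0 R, f w = ∫ r in Ioo 0 R, (2 * π * r) • circleAverage f 0 r := by
  rw [integrableOn_ball_zero_iff_integrableOn_polar, Measure.volume_eq_prod] at hf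
  rw [setIntegral_ball_zero_eq_setIntegral_polar, Measure.volume_eq_prod, setIntegral_prod _ hf]
  refine setIntegral_congr_fun measurableSet_Ioo fun r _ => ?_
  simp only [polarCoord_symm_eq_circleMap, integral_smul, setIntegral_Ioo_neg_pi_pi_comp_circleMap,
    smul_smul]
  ring_nf

theorem locallyIntegrable_inv : LocallyIntegrable (fun w : ℂ => w⁻¹) :=
  locallyIntegrable_of_norm_le_rpow (E := ℂ) (α := 1) (C := 1) (by simp) (by simp)
    (.of_forall fun w => by simp [Real.rpow_neg_one]) (by fun_prop)

theorem integrableOn_inv_const_sub (z : ℂ) {s : Set ℂ} (hs : IsCompact s) :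
    IntegrableOn (fun w => (z - w)⁻¹) s :=
  ((Measure.measurePreserving_sub_left volume z).integrableOn_image
    (Homeomorph.subLeft z).measurableEmbedding).1
    (locallyIntegrable_inv.integrableOn_isCompact (hs.image (by fun_prop)))

end Complex

theorem one_sub_mul_ne_zero_of_norm_mul_lt_one {𝕜 : Type*} [NormedDivisionRing 𝕜] {a b : 𝕜}
    (h : ‖a‖ * ‖b‖ < 1) : 1 - a * b ≠ 0 := fun hab => by
  have := congrArg norm (sub_eq_zero.1 hab)
  rw [norm_one, norm_mul] at this
  linarith

theorem integral_Ioo_two_pi_mul_smul {E : Type*} [NormedAddCommGroup E] [NormedSpace ℝ E]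
    [CompleteSpace E] {a : ℝ} (ha : 0 ≤ a) (c : E) :
    ∫ r in Ioo 0 a, (2 * π * r) • c = (π * a ^ 2) • c := by
  rw [integral_smul_const, ← integral_Ioc_eq_integral_Ioo, ← intervalIntegral.integral_of_le ha,
    intervalIntegral.integral_const_mul, integral_id]
  ring_nf

theorem circleAverage_conj (f : ℂ → ℂ) (c : ℂ) (R : ℝ) :
    circleAverage (fun w => conj (f w)) c R = conj (circleAverage f c R) := by
  simp only [circleAverage_def, intervalIntegral.integral_of_le (by positivity : 0 ≤ 2 * π),
    integral_conj, Complex.real_smul, map_mul, Complex.conj_ofReal]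

theorem circleAverage_conj_of_differentiableOn {f : ℂ → ℂ} {c : ℂ} {r : ℝ}
    (hf : DifferentiableOn ℂ f (closedBall c |r|)) :
    circleAverage (fun w => conj (f w)) c r = conj (f c) := by
  rw [circleAverage_conj, (hf.mono closure_ball_subset_closedBall).diffContOnCl.circleAverage]

theorem circleAverage_inv_const_sub_of_abs_lt {z : ℂ} {r : ℝ} (h : |r| < ‖z‖) :
    circleAverage (fun w => (z - w)⁻¹) 0 r = z⁻¹ := by
  have hden : ∀ w ∈ closedBall (0 : ℂ) |r|, z - w ≠ 0 := fun w hw hzw => by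
    rw [mem_closedBall_zero_iff, ← sub_eq_zero.1 hzw] at hw
    linarith
  have hf : DifferentiableOn ℂ (fun w => (z - w)⁻¹) (closedBall 0 |r|) :=
    DifferentiableOn.inv (by fun_prop) hden
  rw [(hf.mono closure_ball_subset_closedBall).diffContOnCl.circleAverage, sub_zero]

theorem circleAverage_inv_const_sub_of_lt_abs {z : ℂ} {r : ℝ} (h : ‖z‖ < |r|) :
    circleAverage (fun w => (z - w)⁻¹) 0 r = 0 := by
  have hr : 0 < |r| := (norm_nonneg z).trans_lt h
  have hden : ∀ w ∈ closedBall (0 : ℂ) |r|, conj z * w - (r : ℂ) ^ 2 ≠ 0 := fun w hw hzw => by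
    rw [mem_closedBall_zero_iff] at hw
    have := congrArg norm (sub_eq_zero.1 hzw)
    rw [norm_mul, Complex.norm_conj, norm_pow, Complex.norm_real, Real.norm_eq_abs] at this
    nlinarith [mul_le_mul_of_nonneg_left hw (norm_nonneg z), mul_lt_mul_of_pos_right h hr]
  have hf : DifferentiableOn ℂ (fun w => w / (conj z * w - (r : ℂ) ^ 2)) (closedBall 0 |r|) :=
    DifferentiableOn.div (by fun_prop) (by fun_prop) hden
  have hsphere : EqOn (fun w => (z - w)⁻¹) (fun w => conj (w / (conj z * w - (r : ℂ) ^ 2)))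
      (sphere 0 |r|) := fun w hw => by
    rw [mem_sphere_zero_iff_norm] at hw
    have hw0 : conj w ≠ 0 := (map_ne_zero _).2 (norm_pos_iff.1 (hw ▸ hr))
    have hr2 : (r : ℂ) ^ 2 = conj w * w := by
      rw [mul_comm, Complex.mul_conj, Complex.normSq_eq_norm_sq, hw, sq_abs, Complex.ofReal_pow]
    simp only [map_div₀, map_sub, map_mul, Complex.conj_conj, hr2]
    field_simp
  rw [circleAverage_congr_sphere hsphere, circleAverage_conj_of_differentiableOn hf]
  simp

theorem circleAverage_conj_div_one_sub_mul_conj {z : ℂ} {r : ℝ} (h : ‖z‖ * |r| < 1) :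
    circleAverage (fun w => conj w / (1 - z * conj w)) 0 r = 0 := by
  have hden : ∀ w ∈ closedBall (0 : ℂ) |r|, 1 - conj z * w ≠ 0 := fun w hw =>
    one_sub_mul_ne_zero_of_norm_mul_lt_one <| by
      rw [Complex.norm_conj]
      exact (mul_le_mul_of_nonneg_left (mem_closedBall_zero_iff.1 hw) (norm_nonneg z)).trans_lt h
  have hf : DifferentiableOn ℂ (fun w => w / (1 - conj z * w)) (closedBall 0 |r|) :=
    DifferentiableOn.div (by fun_prop) (by fun_prop) hden
  simpa using circleAverage_conj_of_differentiableOn hf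

-- The `dz`-coefficient of the propagator on the disk, without the factor `1 / (4πi)`.
noncomputable def propagatorCoeff (z w : ℂ) : ℂ :=
  1 / (z - w) - conj w / (1 - z * conj w) - conj z

theorem integrableOn_propagatorCoeff {z : ℂ} (hz : ‖z‖ < 1) :
    IntegrableOn (propagatorCoeff z) (ball 0 1) := by
  have hden : ∀ w ∈ closedBall (0 : ℂ) 1, 1 - z * conj w ≠ 0 := fun w hw =>
    one_sub_mul_ne_zero_of_norm_mul_lt_one <| by
      rw [Complex.norm_conj]
      exact (mul_le_of_le_one_right (norm_nonneg z) (mem_closedBall_zero_iff.1 hw)).trans_lt hz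
  have hcont : ContinuousOn (fun w => conj w / (1 - z * conj w) + conj z) (closedBall 0 1) :=
    ((Complex.continuous_conj.continuousOn).div (by fun_prop) hden).add continuousOn_const
  have := ((Complex.integrableOn_inv_const_sub z (isCompact_closedBall 0 1)).sub
    (hcont.integrableOn_compact (isCompact_closedBall 0 1))).mono_set ball_subset_closedBall
  refine this.congr_fun (fun w _ => ?_) measurableSet_ball
  simp only [propagatorCoeff, one_div, Pi.sub_apply]
  ring

theorem circleAverage_propagatorCoeff {z : ℂ} (hz : ‖z‖ < 1) {r : ℝ} (hr : r ∈ Ioo 0 1)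
    (hrz : r ≠ ‖z‖) :
    circleAverage (propagatorCoeff z) 0 r = (Iio ‖z‖).indicator (fun _ => z⁻¹) r - conj z := by
  obtain ⟨hr0, hr1⟩ := hr
  have habs : |r| = r := abs_of_pos hr0
  have hsub : ∀ w ∈ sphere (0 : ℂ) |r|, z - w ≠ 0 := fun w hw hzw => hrz <| by
    rw [sub_eq_zero.1 hzw, mem_sphere_zero_iff_norm.1 hw, habs]
  have hzr : ‖z‖ * |r| < 1 := by rw [habs]; nlinarith [norm_nonneg z]
  have hden : ∀ w ∈ sphere (0 : ℂ) |r|, 1 - z * conj w ≠ 0 := fun w hw =>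
    one_sub_mul_ne_zero_of_norm_mul_lt_one <| by
      rwa [Complex.norm_conj, mem_sphere_zero_iff_norm.1 hw]
  have h₁ : CircleIntegrable (fun w => (z - w)⁻¹) 0 r :=
    ContinuousOn.circleIntegrable' (ContinuousOn.inv₀ (by fun_prop) hsub)
  have h₂ : CircleIntegrable (fun w => conj w / (1 - z * conj w)) 0 r :=
    ContinuousOn.circleIntegrable'
      ((Complex.continuous_conj.continuousOn).div (by fun_prop) hden)
  have hcoeff : propagatorCoeff z = fun w => (z - w)⁻¹ - conj w / (1 - z * conj w) - conj z := by
    funext w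
    rw [propagatorCoeff, one_div]
  rw [hcoeff, circleAverage_fun_sub (f₁ := fun w => (z - w)⁻¹ - conj w / (1 - z * conj w))
      (h₁.sub h₂) (circleIntegrable_const _ _ _),
    circleAverage_fun_sub h₁ h₂, circleAverage_const, circleAverage_conj_div_one_sub_mul_conj hzr,
    sub_zero]
  rcases lt_or_gt_of_ne hrz with h | h
  · rw [indicator_of_mem (mem_Iio.2 h), circleAverage_inv_const_sub_of_abs_lt (by rwa [habs])]
  · rw [indicator_of_notMem (s := Iio ‖z‖) (not_lt.2 h.le),
      circleAverage_inv_const_sub_of_lt_abs (by rwa [habs])]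

/-- For `|z| < 1`, the function `w ↦ 1/(z - w) - conj w/(1 - z·conj w) - conj z` is
Lebesgue-integrable on the open unit disk and its integral over the open unit disk is `0`.
(This is the `dz`-component of Kontsevich's lemma `∫_𝔻 𝒫(z,w) ∧ φ(w,u) = 0`.) -/
theorem stmt4 (z : ℂ) (hz : ‖z‖ < 1) :
    IntegrableOn
        (fun w : ℂ =>
          1 / (z - w) - (starRingEnd ℂ) w / (1 - z * (starRingEnd ℂ) w) - (starRingEnd ℂ) z)
        {w : ℂ | ‖w‖ < 1} volume ∧
    ∫ w in {w : ℂ | ‖w‖ < 1},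
        (1 / (z - w) - (starRingEnd ℂ) w / (1 - z * (starRingEnd ℂ) w) - (starRingEnd ℂ) z) =
      0 := by
  have hdisk : {w : ℂ | ‖w‖ < 1} = ball 0 1 := by ext; simp
  have hf := integrableOn_propagatorCoeff hz
  rw [hdisk]
  refine ⟨hf, ?_⟩
  have hradial : ∀ᵐ r, r ∈ Ioo (0 : ℝ) 1 → (2 * π * r) • circleAverage (propagatorCoeff z) 0 r =
      (Iio ‖z‖).indicator (fun r => (2 * π * r) • z⁻¹) r - (2 * π * r) • conj z := by
    filter_upwards [compl_mem_ae_iff.2 (measure_singleton ‖z‖)] with r hrz hr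
    rw [circleAverage_propagatorCoeff hz hr hrz, smul_sub, indicator_smul_apply]
  have hlinear (c : ℂ) : IntegrableOn (fun r : ℝ => (2 * π * r) • c) (Ioo 0 1) :=
    (Continuous.integrableOn_Icc (by fun_prop)).mono_set Ioo_subset_Icc_self
  have hconj : (‖z‖ ^ 2 : ℂ) * z⁻¹ = conj z := by
    rcases eq_or_ne z 0 with rfl | hz0
    · simp
    · rw [← Complex.mul_conj', mul_comm z, mul_assoc, mul_inv_cancel₀ hz0, mul_one]
  change ∫ w in ball 0 1, propagatorCoeff z w = 0
  rw [Complex.setIntegral_ball_zero_eq_integral_circleAverage hf,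
    setIntegral_congr_ae measurableSet_Ioo hradial,
    integral_sub ((hlinear _).indicator measurableSet_Iio) (hlinear _),
    setIntegral_indicator measurableSet_Iio, Ioo_inter_Iio, min_eq_right hz.le,
    integral_Ioo_two_pi_mul_smul (norm_nonneg z), integral_Ioo_two_pi_mul_smul zero_le_one,
    Complex.real_smul, Complex.real_smul]
  push_cast
  rw [mul_assoc, hconj]
  ring
end

section
/- Let n ∈ ℕ and let ω be an antisymmetric n × n matrix with complex entries. On A := MvPolynomial (Fin n) ℂ define for each k ≥ 0 the bidifferential operator B_k(a, b) := Σ_{i, j : Fin k → Fin n} (Π_t ω_{i(t), j(t)}) · (Π_t ∂_{i(t)} a) · (Π_t ∂_{j(t)} b), where ∂_m is the partial derivative in the m-th variable, and define the Moyal product on formal power series in a parameter ℏ with coefficients in A by (f ⋆ g)_m := Σ_{k + p + q = m} (1/k!) (−i/2)^k B_k(f_p, g_q), where f_p denotes the ℏ^p-coefficient. Then ⋆ is associative: (f ⋆ g) ⋆ h = f ⋆ (g ⋆ h) for all f, g, h ∈ A⟦ℏ⟧. -/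
/-- Iterated partial derivative `∂_{i(0)} ∂_{i(1)} ⋯ ∂_{i(k-1)} a` of a polynomial. -/
noncomputable def iterPDeriv {n k : ℕ} (i : Fin k → Fin n)
    (a : MvPolynomial (Fin n) ℂ) : MvPolynomial (Fin n) ℂ :=
  (List.ofFn i).foldr (fun m p => MvPolynomial.pderiv m p) a

/-- The bidifferential operator
`B_k(a,b) = Σ_{i,j : Fin k → Fin n} (Π_t ω_{i(t) j(t)}) (Π_t ∂_{i(t)} a)(Π_t ∂_{j(t)} b)`. -/
noncomputable def moyalB {n : ℕ} (ω : Matrix (Fin n) (Fin n) ℂ) (k : ℕ)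
    (a b : MvPolynomial (Fin n) ℂ) : MvPolynomial (Fin n) ℂ :=
  ∑ i : Fin k → Fin n, ∑ j : Fin k → Fin n,
    (∏ t, ω (i t) (j t)) • (iterPDeriv i a * iterPDeriv j b)

/-- The Moyal product on formal power series in `ℏ` with polynomial coefficients,
given degreewise by `(f ⋆ g)_m = Σ_{k+p+q=m} (1/k!) (−i/2)^k B_k(f_p, g_q)`. -/
noncomputable def moyalMul {n : ℕ} (ω : Matrix (Fin n) (Fin n) ℂ)
    (f g : ℕ → MvPolynomial (Fin n) ℂ) : ℕ → MvPolynomial (Fin n) ℂ :=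
  fun m => ∑ kr ∈ Finset.HasAntidiagonal.antidiagonal m, ∑ pq ∈ Finset.HasAntidiagonal.antidiagonal kr.2,
    ((1 / (kr.1.factorial : ℂ)) * (-Complex.I / 2) ^ kr.1) • moyalB ω kr.1 (f pq.1) (g pq.2)

/-!
Write `A = MvPolynomial σ K` and model the tensor power `A^{⊗ k}` by polynomials in the variables
`Fin k × σ`. For the bivector `P = ω^{ij} ∂_i ⊗ ∂_j` the Moyal product is
`F ⋆ G = μ (exp (ℏ P) (F ⊗ G))`, the constant `-i/2` being absorbed into `ω`. By the Leibniz rule,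
`P` applied after multiplying the factors 0 and 1 of `A^{⊗ 3}` becomes `P₀₂ + P₁₂`, so
`(F ⋆ G) ⋆ H = μ (exp (ℏ (P₀₂ + P₁₂)) (exp (ℏ P₀₁) (F ⊗ G ⊗ H)))`, and likewise
`F ⋆ (G ⋆ H) = μ (exp (ℏ (P₀₁ + P₀₂)) (exp (ℏ P₁₂) (F ⊗ G ⊗ H)))`. The operators `P_{ab}` have
constant coefficients, hence commute, and both sides equal
`μ (exp (ℏ (P₀₁ + P₀₂ + P₁₂)) (F ⊗ G ⊗ H))`.
-/

open Finset
open scoped PowerSeries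

theorem Finset.Nat.sum_antidiagonal_antidiagonal {M : Type*} [AddCommMonoid M] (m : ℕ)
    (F : ℕ → ℕ → ℕ → M) :
    ∑ pq ∈ antidiagonal m, ∑ kr ∈ antidiagonal pq.1, F kr.1 kr.2 pq.2 =
      ∑ kt ∈ antidiagonal m, ∑ rq ∈ antidiagonal kt.2, F kt.1 rq.1 rq.2 := by
  simp only [Finset.sum_sigma']
  apply Finset.sum_nbij' (fun ⟨⟨_p, q⟩, ⟨k, r⟩⟩ ↦ ⟨(k, r + q), (r, q)⟩)
    (fun ⟨⟨k, _t⟩, ⟨r, q⟩⟩ ↦ ⟨(k + r, q), (k, r)⟩) <;>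
    aesop (add simp [add_assoc])

theorem Commute.inv_factorial_smul_add_pow {K R : Type*} [Field K] [CharZero K] [Ring R]
    [Algebra K R] {x y : R} (h : Commute x y) (s : ℕ) :
    (s.factorial : K)⁻¹ • (x + y) ^ s =
      ∑ kl ∈ antidiagonal s,
        ((kl.1.factorial : K)⁻¹ * (kl.2.factorial : K)⁻¹) • (x ^ kl.1 * y ^ kl.2) := by
  rw [h.add_pow', Finset.smul_sum]
  refine Finset.sum_congr rfl fun kl hkl => ?_
  rw [HasAntidiagonal.mem_antidiagonal] at hkl
  subst hkl
  rw [← Nat.cast_smul_eq_nsmul K, smul_smul, Nat.cast_add_choose]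
  have : ((kl.1 + kl.2).factorial : K) ≠ 0 := mod_cast (Nat.factorial_ne_zero _)
  congr 1
  field_simp

namespace MvPolynomial

theorem pderiv_pderiv_comm {R σ : Type*} [CommRing R] (i j : σ) (p : MvPolynomial σ R) :
    pderiv i (pderiv j p) = pderiv j (pderiv i p) := by
  classical
  have h : ⁅pderiv i, pderiv j⁆ = (0 : Derivation R (MvPolynomial σ R) (MvPolynomial σ R)) :=
    derivation_ext fun k => by
      rw [Derivation.commutator_apply, pderiv_X, pderiv_X, Pi.single_apply, Pi.single_apply]
      split_ifs <;> simp
  have := congr($h p)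
  rwa [Derivation.commutator_apply, Derivation.zero_apply, sub_eq_zero] at this

theorem pderiv_rename_eq_sum {R σ τ : Type*} [CommSemiring R] [Fintype σ] [DecidableEq σ]
    [DecidableEq τ] (f : σ → τ) (m : τ) (p : MvPolynomial σ R) :
    pderiv m (rename f p) = ∑ v with f v = m, rename f (pderiv v p) := by
  induction p using MvPolynomial.induction_on with
  | C a => simp
  | add p q hp hq => simp [hp, hq, sum_add_distrib]
  | mul_X p v ih =>
    simp [Derivation.leibniz, pderiv_X, ih, sum_add_distrib, Finset.mul_sum, Pi.single_apply,
      apply_ite]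

end MvPolynomial

theorem PowerSeries.mapAlgHom_mapAlgHom {R A B C : Type*} [CommSemiring R] [Semiring A]
    [Algebra R A] [Semiring B] [Algebra R B] [Semiring C] [Algebra R C] (L : B →ₐ[R] C)
    (M : A →ₐ[R] B) (X : A⟦X⟧) :
    mapAlgHom L (mapAlgHom M X) = mapAlgHom (L.comp M) X := by
  ext; simp [PowerSeries.mapAlgHom_apply]

section ExpAction

open PowerSeries

variable {K A B : Type*} [Field K] [CommRing A] [Algebra K A] [CommRing B]
  [Algebra K B]

/-- `expAction T X = exp(ℏ T) X`, where `ℏ` is the variable of the power series and `T` acts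
coefficientwise. -/
noncomputable def expAction (T : Module.End K A) (X : A⟦X⟧) : A⟦X⟧ :=
  PowerSeries.mk fun m =>
    ∑ kr ∈ antidiagonal m, (kr.1.factorial : K)⁻¹ • (T ^ kr.1) (coeff kr.2 X)

theorem coeff_expAction (T : Module.End K A) (X : A⟦X⟧) (m : ℕ) :
    coeff m (expAction T X) =
      ∑ kr ∈ antidiagonal m, (kr.1.factorial : K)⁻¹ • (T ^ kr.1) (coeff kr.2 X) :=
  coeff_mk _ _

theorem expAction_expAction [CharZero K] {S T : Module.End K A} (h : Commute S T) (X : A⟦X⟧) :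
    expAction S (expAction T X) = expAction (S + T) X := by
  ext m
  simp only [coeff_expAction, map_sum, map_smul, Finset.smul_sum, smul_smul]
  rw [← Finset.Nat.sum_antidiagonal_antidiagonal m fun k l r =>
    ((k.factorial : K)⁻¹ * (l.factorial : K)⁻¹) • (S ^ k) ((T ^ l) (coeff r X))]
  refine Finset.sum_congr rfl fun sr _ => ?_
  rw [← LinearMap.smul_apply, h.inv_factorial_smul_add_pow, LinearMap.sum_apply]
  simp only [LinearMap.smul_apply, Module.End.mul_apply]

theorem mapAlgHom_expAction (L : A →ₐ[K] B) {S : Module.End K A} {T : Module.End K B}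
    (h : ∀ x, L (S x) = T (L x)) (X : A⟦X⟧) :
    mapAlgHom L (expAction S X) = expAction T (mapAlgHom L X) := by
  have hpow (k : ℕ) (x : A) : L ((S ^ k) x) = (T ^ k) (L x) := by
    induction k generalizing x with
    | zero => rfl
    | succ k ih => rw [pow_succ, pow_succ, Module.End.mul_apply, Module.End.mul_apply, ih, h]
  ext m
  simp [coeff_expAction, mapAlgHom_apply, hpow]

theorem expAction_mul {T : Module.End K A} {Y : A⟦X⟧}
    (h : ∀ n u, T (u * coeff n Y) = T u * coeff n Y) (X : A⟦X⟧) :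
    expAction T X * Y = expAction T (X * Y) := by
  have hpow (k n : ℕ) (u : A) : (T ^ k) (u * coeff n Y) = (T ^ k) u * coeff n Y := by
    induction k generalizing u with
    | zero => rfl
    | succ k ih => rw [pow_succ, Module.End.mul_apply, h, ih, Module.End.mul_apply]
  ext m
  simp only [PowerSeries.coeff_mul, coeff_expAction, Finset.sum_mul, smul_mul_assoc, ← hpow,
    map_sum, Finset.smul_sum]
  exact Finset.Nat.sum_antidiagonal_antidiagonal m fun k r q =>
    (k.factorial : K)⁻¹ • (T ^ k) (coeff r X * coeff q Y)

end ExpAction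

section Slots

open MvPolynomial

variable {R σ S S' S'' : Type*} [CommSemiring R]

/-- `MvPolynomial (S × σ) R` models the tensor power `A^{⊗ S}` of `A = MvPolynomial σ R`: the
variable `(s, i)` is the `i`-th variable of the `s`-th tensor factor. -/
noncomputable def slotEmbed (s : S) : MvPolynomial σ R →ₐ[R] MvPolynomial (S × σ) R :=
  rename (Prod.mk s)

noncomputable def slotMap (φ : S → S') :
    MvPolynomial (S × σ) R →ₐ[R] MvPolynomial (S' × σ) R :=
  rename (Prod.map φ id)

noncomputable def slotMerge : MvPolynomial (S × σ) R →ₐ[R] MvPolynomial σ R :=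
  rename Prod.snd

theorem slotMap_comp_slotEmbed (φ : S → S') (s : S) :
    (slotMap φ).comp (slotEmbed s) = (slotEmbed (φ s) : MvPolynomial σ R →ₐ[R] _) :=
  algHom_ext fun _ => by simp [slotMap, slotEmbed]

theorem slotMerge_comp_slotMap (φ : S → S') :
    slotMerge.comp (slotMap φ) = (slotMerge : MvPolynomial (S × σ) R →ₐ[R] _) :=
  algHom_ext fun ⟨_, _⟩ => by simp [slotMap, slotMerge]

theorem slotMerge_slotEmbed (s : S) (p : MvPolynomial σ R) : slotMerge (slotEmbed s p) = p := by
  rw [slotMerge, slotEmbed, rename_rename]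
  exact rename_id_apply p

theorem slotEmbed_comp_slotMerge {s : S} {φ : S'' → S} {ψ : S' → S''}
    (h : ∀ i, φ (ψ i) = s) :
    (slotEmbed s).comp slotMerge = ((slotMap φ).comp (slotMap ψ) :
      MvPolynomial (S' × σ) R →ₐ[R] _) :=
  algHom_ext fun ⟨_, _⟩ => by simp [slotMap, slotEmbed, slotMerge, h]

theorem pderiv_slotEmbed_self (s : S) (i : σ) (p : MvPolynomial σ R) :
    pderiv (s, i) (slotEmbed s p) = slotEmbed s (pderiv i p) :=
  pderiv_rename (Prod.mk_right_injective s) i p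

variable [Fintype σ] [DecidableEq σ] [DecidableEq S] [DecidableEq S']

theorem pderiv_slotMap [Fintype S] (φ : S → S') (t : S') (i : σ)
    (p : MvPolynomial (S × σ) R) :
    pderiv (t, i) (slotMap φ p) = ∑ s with φ s = t, slotMap φ (pderiv (s, i) p) := by
  rw [slotMap, pderiv_rename_eq_sum, Finset.sum_filter, Finset.sum_filter, Fintype.sum_prod_type]
  simp [Prod.ext_iff, ite_and]

theorem pderiv_slotEmbed_of_ne {s t : S} (h : s ≠ t) (i : σ) (p : MvPolynomial σ R) :
    pderiv (t, i) (slotEmbed s p) = 0 := by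
  rw [slotEmbed, pderiv_rename_eq_sum]
  simp [h]

end Slots

section Bivector

open MvPolynomial

variable {R σ S S' : Type*} [CommSemiring R] [Fintype σ]

/-- `bivector ω s s'` is `ω^{ij} ∂_i ⊗ ∂_j`, acting on the tensor factors `s` and `s'`. -/
noncomputable def bivector (ω : Matrix σ σ R) (s s' : S) :
    Module.End R (MvPolynomial (S × σ) R) :=
  ∑ i, ∑ j, ω i j • ((pderiv (s, i)).toLinearMap * (pderiv (s', j)).toLinearMap)

theorem bivector_apply (ω : Matrix σ σ R) (s s' : S) (x : MvPolynomial (S × σ) R) :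
    bivector ω s s' x = ∑ i, ∑ j, ω i j • pderiv (s, i) (pderiv (s', j) x) := by
  simp [bivector]

theorem bivector_commute {R : Type*} [CommRing R] (ω : Matrix σ σ R) (s s' t t' : S) :
    Commute (bivector ω s s') (bivector ω t t') := by
  have hpderiv (u v : S × σ) :
      Commute (pderiv u).toLinearMap (pderiv (R := R) v).toLinearMap :=
    LinearMap.ext fun p => pderiv_pderiv_comm u v p
  refine .sum_left _ _ _ fun i _ => .sum_left _ _ _ fun j _ => ?_
  refine .sum_right _ _ _ fun k _ => .sum_right _ _ _ fun l _ => ?_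
  refine .smul_left (.smul_right ?_ _) _
  exact ((hpderiv _ _).mul_right (hpderiv _ _)).mul_left
    ((hpderiv _ _).mul_right (hpderiv _ _))

variable [DecidableEq σ] [DecidableEq S] [DecidableEq S']

theorem bivector_slotEmbed_mul_slotEmbed (ω : Matrix σ σ R) {s s' : S} (h : s ≠ s')
    (a b : MvPolynomial σ R) :
    bivector ω s s' (slotEmbed s a * slotEmbed s' b) =
      ∑ i, ∑ j, ω i j • (slotEmbed s (pderiv i a) * slotEmbed s' (pderiv j b)) := by
  simp [bivector_apply, Derivation.leibniz, pderiv_slotEmbed_self, pderiv_slotEmbed_of_ne h,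
    pderiv_slotEmbed_of_ne h.symm, mul_comm]

theorem bivector_mul_slotEmbed (ω : Matrix σ σ R) {s s' t : S} (hs : t ≠ s) (hs' : t ≠ s')
    (x : MvPolynomial (S × σ) R) (c : MvPolynomial σ R) :
    bivector ω s s' (x * slotEmbed t c) = bivector ω s s' x * slotEmbed t c := by
  have hmul {u : S} (hu : t ≠ u) (i : σ) (z : MvPolynomial (S × σ) R) :
      pderiv (u, i) (z * slotEmbed t c) = pderiv (u, i) z * slotEmbed t c := by
    rw [Derivation.leibniz, pderiv_slotEmbed_of_ne hu, smul_zero, zero_add, smul_eq_mul, mul_comm]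
  simp only [bivector_apply, hmul hs', hmul hs, Finset.sum_mul, smul_mul_assoc]

theorem bivector_slotMap [Fintype S] (ω : Matrix σ σ R) (φ : S → S') (t t' : S')
    (x : MvPolynomial (S × σ) R) :
    bivector ω t t' (slotMap φ x) =
      slotMap φ (∑ s with φ s = t, ∑ s' with φ s' = t', bivector ω s s' x) := by
  simp only [bivector_apply, pderiv_slotMap, map_sum, map_smul, Finset.smul_sum]
  simp_rw [Finset.sum_comm (s := univ.filter (φ · = t')),
    Finset.sum_comm (t := univ.filter (φ · = t))]

theorem bivector_slotMap_of_injective [Fintype S] (ω : Matrix σ σ R) {φ : S → S'}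
    (hφ : φ.Injective) (s s' : S) (x : MvPolynomial (S × σ) R) :
    bivector ω (φ s) (φ s') (slotMap φ x) = slotMap φ (bivector ω s s' x) := by
  simp [bivector_slotMap, hφ.eq_iff, Finset.filter_eq']

end Bivector

section BivectorSeries

open PowerSeries

variable {K σ S S' : Type*} [Field K] [Fintype σ] [DecidableEq σ] [DecidableEq S]
  [DecidableEq S'] (ω : Matrix σ σ K)

theorem mapAlgHom_slotMap_expAction [Fintype S] (φ : S → S') (t t' : S')
    (X : (MvPolynomial (S × σ) K)⟦X⟧) :
    mapAlgHom (slotMap φ)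
        (expAction (∑ s with φ s = t, ∑ s' with φ s' = t', bivector ω s s') X) =
      expAction (bivector ω t t') (mapAlgHom (slotMap φ) X) :=
  mapAlgHom_expAction _ (fun x => by simp only [bivector_slotMap, LinearMap.sum_apply]) X

theorem mapAlgHom_slotMap_expAction_of_injective [Fintype S] {φ : S → S'} (hφ : φ.Injective)
    (s s' : S) (X : (MvPolynomial (S × σ) K)⟦X⟧) :
    mapAlgHom (slotMap φ) (expAction (bivector ω s s') X) =
      expAction (bivector ω (φ s) (φ s')) (mapAlgHom (slotMap φ) X) :=
  mapAlgHom_expAction _ (fun x => (bivector_slotMap_of_injective ω hφ s s' x).symm) X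

theorem expAction_bivector_mul_slotEmbed {s s' t : S} (hs : t ≠ s) (hs' : t ≠ s')
    (X : (MvPolynomial (S × σ) K)⟦X⟧) (Y : (MvPolynomial σ K)⟦X⟧) :
    expAction (bivector ω s s') X * mapAlgHom (slotEmbed t) Y =
      expAction (bivector ω s s') (X * mapAlgHom (slotEmbed t) Y) :=
  expAction_mul (fun n u => by
    simp only [mapAlgHom_apply, coeff_map, RingHom.coe_coe, bivector_mul_slotEmbed ω hs hs']) X

end BivectorSeries

section MoyalSeries

open PowerSeries

variable {K σ : Type*} [Field K] [CharZero K] [Fintype σ] [DecidableEq σ] (ω : Matrix σ σ K)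

noncomputable def moyalSeries (F G : (MvPolynomial σ K)⟦X⟧) : (MvPolynomial σ K)⟦X⟧ :=
  mapAlgHom slotMerge (expAction (bivector ω (0 : Fin 2) 1)
    (mapAlgHom (slotEmbed 0) F * mapAlgHom (slotEmbed 1) G))

noncomputable def moyalSeries₃ (F G H : (MvPolynomial σ K)⟦X⟧) :
    (MvPolynomial σ K)⟦X⟧ :=
  mapAlgHom slotMerge (expAction (bivector ω (0 : Fin 3) 1 + bivector ω 0 2 + bivector ω 1 2)
    (mapAlgHom (slotEmbed 0) F * mapAlgHom (slotEmbed 1) G * mapAlgHom (slotEmbed 2) H))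

theorem moyalSeries_moyalSeries_left (F G H : (MvPolynomial σ K)⟦X⟧) :
    moyalSeries ω (moyalSeries ω F G) H = moyalSeries₃ ω F G H := by
  let φ : Fin 3 → Fin 2 := ![0, 0, 1]
  have hφ : ∑ s with φ s = 0, ∑ s' with φ s' = 1, bivector ω s s' =
      bivector ω 0 2 + bivector ω 1 2 := by
    simp [φ, Finset.sum_filter, Fin.sum_univ_three]
  have hinner : mapAlgHom (slotEmbed 0) (moyalSeries ω F G) * mapAlgHom (slotEmbed 1) H =
      mapAlgHom (slotMap φ) (expAction (bivector ω 0 1)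
        (mapAlgHom (slotEmbed 0) F * mapAlgHom (slotEmbed 1) G * mapAlgHom (slotEmbed 2) H)) := by
    rw [moyalSeries, mapAlgHom_mapAlgHom,
      slotEmbed_comp_slotMerge (ψ := Fin.castSucc) (φ := φ) (by decide), ← mapAlgHom_mapAlgHom,
      mapAlgHom_slotMap_expAction_of_injective ω (Fin.castSucc_injective 2),
      map_mul (mapAlgHom (slotMap Fin.castSucc)), mapAlgHom_mapAlgHom, mapAlgHom_mapAlgHom,
      slotMap_comp_slotEmbed, slotMap_comp_slotEmbed,
      ← expAction_bivector_mul_slotEmbed ω (t := 2) (by decide) (by decide),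
      map_mul (mapAlgHom (slotMap φ)), mapAlgHom_mapAlgHom (slotMap φ), slotMap_comp_slotEmbed]
    rfl
  rw [moyalSeries, hinner, ← mapAlgHom_slotMap_expAction, hφ, mapAlgHom_mapAlgHom,
    slotMerge_comp_slotMap,
    expAction_expAction ((bivector_commute ..).add_left (bivector_commute ..)), moyalSeries₃,
    add_comm _ (bivector ω _ _), ← add_assoc]

theorem moyalSeries_moyalSeries_right (F G H : (MvPolynomial σ K)⟦X⟧) :
    moyalSeries ω F (moyalSeries ω G H) = moyalSeries₃ ω F G H := by
  let φ : Fin 3 → Fin 2 := ![0, 1, 1]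
  have hφ : ∑ s with φ s = 0, ∑ s' with φ s' = 1, bivector ω s s' =
      bivector ω 0 1 + bivector ω 0 2 := by
    simp [φ, Finset.sum_filter, Fin.sum_univ_three]
  have hinner : mapAlgHom (slotEmbed 0) F * mapAlgHom (slotEmbed 1) (moyalSeries ω G H) =
      mapAlgHom (slotMap φ) (expAction (bivector ω 1 2)
        (mapAlgHom (slotEmbed 0) F * mapAlgHom (slotEmbed 1) G * mapAlgHom (slotEmbed 2) H)) := by
    rw [moyalSeries, mapAlgHom_mapAlgHom,
      slotEmbed_comp_slotMerge (ψ := Fin.succ) (φ := φ) (by decide), ← mapAlgHom_mapAlgHom,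
      mapAlgHom_slotMap_expAction_of_injective ω (Fin.succ_injective 2),
      map_mul (mapAlgHom (slotMap Fin.succ)), mapAlgHom_mapAlgHom, mapAlgHom_mapAlgHom,
      slotMap_comp_slotEmbed, slotMap_comp_slotEmbed, mul_rotate (mapAlgHom (slotEmbed 0) F),
      ← expAction_bivector_mul_slotEmbed ω (t := 0) (by decide) (by decide),
      map_mul (mapAlgHom (slotMap φ)), mapAlgHom_mapAlgHom (slotMap φ), slotMap_comp_slotEmbed]
    exact mul_comm _ _
  rw [moyalSeries, hinner, ← mapAlgHom_slotMap_expAction, hφ, mapAlgHom_mapAlgHom,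
    slotMerge_comp_slotMap,
    expAction_expAction ((bivector_commute ..).add_left (bivector_commute ..)), moyalSeries₃]

theorem moyalSeries_assoc (F G H : (MvPolynomial σ K)⟦X⟧) :
    moyalSeries ω (moyalSeries ω F G) H = moyalSeries ω F (moyalSeries ω G H) := by
  rw [moyalSeries_moyalSeries_left, moyalSeries_moyalSeries_right]

end MoyalSeries

section Moyal

open MvPolynomial

variable {n : ℕ} (ω : Matrix (Fin n) (Fin n) ℂ)

theorem iterPDeriv_snoc {k : ℕ} (i : Fin k → Fin n) (j : Fin n) (a : MvPolynomial (Fin n) ℂ) :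
    iterPDeriv (Fin.snoc i j : Fin (k + 1) → Fin n) a = iterPDeriv i (pderiv j a) := by
  rw [iterPDeriv, List.ofFn_succ', List.concat_eq_append, List.foldr_append]
  simp [iterPDeriv]

theorem moyalB_zero (a b : MvPolynomial (Fin n) ℂ) : moyalB ω 0 a b = a * b := by
  simp [moyalB, iterPDeriv]

theorem moyalB_succ (k : ℕ) (a b : MvPolynomial (Fin n) ℂ) :
    moyalB ω (k + 1) a b = ∑ i, ∑ j, ω i j • moyalB ω k (pderiv i a) (pderiv j b) := by
  simp only [moyalB, Finset.smul_sum, smul_smul]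
  rw [← (Fin.snocEquiv fun _ => Fin n).sum_comp, Fintype.sum_prod_type]
  refine Finset.sum_congr rfl fun i₀ _ => ?_
  simp_rw [← (Fin.snocEquiv fun _ => Fin n).sum_comp, Fintype.sum_prod_type]
  rw [Finset.sum_comm]
  simp [Fin.snocEquiv, Fin.prod_univ_castSucc, iterPDeriv_snoc, mul_comm]

theorem moyalB_smul (c : ℂ) (k : ℕ) (a b : MvPolynomial (Fin n) ℂ) :
    moyalB (c • ω) k a b = c ^ k • moyalB ω k a b := by
  simp [moyalB, Finset.prod_mul_distrib, Finset.smul_sum, smul_smul]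

theorem moyalB_eq_slotMerge (k : ℕ) (a b : MvPolynomial (Fin n) ℂ) :
    moyalB ω k a b =
      slotMerge ((bivector ω (0 : Fin 2) 1 ^ k) (slotEmbed 0 a * slotEmbed 1 b)) := by
  induction k generalizing a b with
  | zero => simp [moyalB_zero, slotMerge_slotEmbed]
  | succ k ih =>
    rw [moyalB_succ, pow_succ, Module.End.mul_apply,
      bivector_slotEmbed_mul_slotEmbed ω zero_ne_one]
    simp [ih]

theorem moyalSeries_mk (f g : ℕ → MvPolynomial (Fin n) ℂ) :
    moyalSeries ((-Complex.I / 2) • ω) (PowerSeries.mk f) (PowerSeries.mk g) =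
      PowerSeries.mk (moyalMul ω f g) := by
  ext m
  simp only [moyalSeries, moyalMul, PowerSeries.mapAlgHom_apply, PowerSeries.coeff_map,
    coeff_expAction, PowerSeries.coeff_mul, PowerSeries.coeff_mk, RingHom.coe_coe, map_sum,
    map_smul, ← moyalB_eq_slotMerge, moyalB_smul, Finset.smul_sum, smul_smul, one_div]

end Moyal

theorem stmt6_general {n : ℕ} (ω : Matrix (Fin n) (Fin n) ℂ)
    (f g h : ℕ → MvPolynomial (Fin n) ℂ) :
    moyalMul ω (moyalMul ω f g) h = moyalMul ω f (moyalMul ω g h) := by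
  have hassoc := moyalSeries_assoc ((-Complex.I / 2) • ω) (.mk f) (.mk g) (.mk h)
  simp only [moyalSeries_mk] at hassoc
  funext m
  simpa using congrArg (PowerSeries.coeff m) hassoc

/-- The Moyal product associated to an antisymmetric matrix `ω` is associative. -/
theorem stmt6 {n : ℕ} (ω : Matrix (Fin n) (Fin n) ℂ) (hω : ω.transpose = -ω)
    (f g h : ℕ → MvPolynomial (Fin n) ℂ) :
    moyalMul ω (moyalMul ω f g) h = moyalMul ω f (moyalMul ω g h) :=
  stmt6_general ω f g h
end
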